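/- arXiv:2104.09485 — 2 statements merged into one kernel-verified Lean document; each statement's English description precedes it below -/
import Mathlib

section
/- Let (θₖ)_{k>n} be complex numbers with ∑_{k>n} (1+k)^{2β} |θₖ|² ≤ L², where β > 1/2. Then ∑_{j=1}^n |∑_{k>n} θₖ exp(−2πikj/n)|² = n·∑_{m=n+1}^{2n} |∑_{r=0}^∞ θ_{m+rn}|² ≤ C·n^{1−2β} for a constant C depending only on L and β. -/
/-!
Write `ζ = exp(-2πi/n)`. Since `ζⁿ = 1`, the frequency `k = m + r n` contributes `θₖ (ζᵐ)ʲ` at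
the grid point `j`, so grouping the tail `k > n` into residue classes with representatives
`m ∈ [n+1, 2n]` turns the sampled tail into the discrete Fourier transform of the aliased
coefficients `aₘ = ∑ᵣ θ_{m+rn}`; the distinct `n`-th roots of unity `ζᵐ` are orthogonal over the
grid, which gives the identity. For the bound, weighted Cauchy–Schwarz with weights `(1+k)^{2β}`
gives `‖aₘ‖² ≤ (∑ᵣ (1+m+rn)^{-2β}) · ∑ᵣ (1+m+rn)^{2β} ‖θ_{m+rn}‖²`, and `1 + m + rn ≥ n(1+r)`
bounds the first factor by `n^{-2β} ∑ᵣ (1+r)^{-2β}`.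
-/

open Complex ComplexConjugate Finset

theorem injective_add_mul_of_mem_Icc {a n : ℕ} (hn : n ≠ 0) :
    Function.Injective fun p : Icc (a + 1) (a + n) × ℕ => (p.1 : ℕ) + p.2 * n := by
  have hdiv : ∀ m ∈ Icc (a + 1) (a + n), ∀ r, (m + r * n - (a + 1)) / n = r := by
    intro m hm r
    rw [mem_Icc] at hm
    rw [show m + r * n - (a + 1) = m - (a + 1) + r * n by omega,
      Nat.add_mul_div_right _ _ (Nat.pos_of_ne_zero hn), Nat.div_eq_of_lt (by omega), zero_add]
  rintro ⟨⟨m, hm⟩, r⟩ ⟨⟨m', hm'⟩, r'⟩ h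
  simp only at h
  have hr : r = r' := by rw [← hdiv m hm r, ← hdiv m' hm' r', h]
  subst hr
  simp only [Prod.mk.injEq, Subtype.mk.injEq, and_true]
  omega

theorem range_add_mul_of_mem_Icc {a n : ℕ} (hn : n ≠ 0) :
    Set.range (fun p : Icc (a + 1) (a + n) × ℕ => (p.1 : ℕ) + p.2 * n) = Set.Ioi a := by
  ext k
  constructor
  · rintro ⟨⟨⟨m, hm⟩, r⟩, rfl⟩
    rw [mem_Icc] at hm
    simp only [Set.mem_Ioi]
    omega
  · intro hk
    rw [Set.mem_Ioi] at hk
    have hmod : (k - (a + 1)) % n < n := Nat.mod_lt _ (Nat.pos_of_ne_zero hn)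
    refine ⟨⟨⟨a + 1 + (k - (a + 1)) % n, mem_Icc.2 ⟨by omega, by omega⟩⟩, (k - (a + 1)) / n⟩, ?_⟩
    have := Nat.mod_add_div' (k - (a + 1)) n
    simp only
    omega

theorem tsum_ite_lt_eq_sum_Icc_tsum_add_mul {M : Type*} [AddCommGroup M] [UniformSpace M]
    [IsUniformAddGroup M] [CompleteSpace M] [T0Space M] {f : ℕ → M} (hf : Summable f)
    {a n : ℕ} (hn : n ≠ 0) :
    ∑' k, (if a < k then f k else 0) = ∑ m ∈ Icc (a + 1) (a + n), ∑' r, f (m + r * n) := by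
  set g := fun p : Icc (a + 1) (a + n) × ℕ => (p.1 : ℕ) + p.2 * n
  have hg : Function.Injective g := injective_add_mul_of_mem_Icc hn
  have hsupp : Function.support (fun k => if a < k then f k else 0) ⊆ Set.range g := by
    rw [range_add_mul_of_mem_Icc hn]
    intro k hk
    by_contra h
    exact hk (if_neg h)
  have hsum : Summable fun k => if a < k then f k else 0 :=
    (hf.indicator (Set.Ioi a)).congr fun k => by simp [Set.indicator_apply]
  rw [← hg.tsum_eq hsupp, Summable.tsum_prod (f := fun c => if a < g c then f (g c) else 0)
    (hsum.comp_injective hg), ← Finset.tsum_subtype]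
  refine tsum_congr fun m => tsum_congr fun r => if_pos ?_
  have := (mem_Icc.1 m.2).1
  simp only [g]
  omega

theorem sum_Icc_pow_eq_ite {K : Type*} [DivisionRing K] [DecidableEq K] {z : K} {n : ℕ}
    (hz : z ^ n = 1) : ∑ j ∈ Icc 1 n, z ^ j = if z = 1 then (n : K) else 0 := by
  split_ifs with h1
  · simp [h1]
  · have hgeom := geom_sum_Ico_mul z (Nat.le_add_left 1 n)
    rw [Ico_add_one_right_eq_Icc, pow_succ, hz, one_mul, pow_one, sub_self] at hgeom
    exact (mul_eq_zero.1 hgeom).resolve_right (sub_ne_zero.2 h1)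

theorem sum_Icc_norm_sum_mul_pow_sq {ι : Type*} (s : Finset ι) (a z : ι → ℂ) {n : ℕ}
    (hn : n ≠ 0) (hz : ∀ i ∈ s, z i ^ n = 1) (hinj : Set.InjOn z s) :
    ∑ j ∈ Icc 1 n, ‖∑ i ∈ s, a i * z i ^ j‖ ^ 2 = n * ∑ i ∈ s, ‖a i‖ ^ 2 := by
  classical
  have horth : ∀ i ∈ s, ∀ i' ∈ s,
      ∑ j ∈ Icc 1 n, (z i * conj (z i')) ^ j = if i = i' then (n : ℂ) else 0 := by
    intro i hi i' hi'
    have hnorm : ‖z i'‖ = 1 := norm_eq_one_of_pow_eq_one (hz i' hi') hn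
    have hz' : z i' ≠ 0 := norm_ne_zero_iff.1 (by simp [hnorm])
    rw [← inv_eq_conj hnorm,
      sum_Icc_pow_eq_ite (by rw [mul_pow, inv_pow, hz i hi, hz i' hi', inv_one, mul_one])]
    exact if_congr ((mul_inv_eq_one₀ hz').trans (hinj.eq_iff hi hi')) rfl rfl
  apply Complex.ofReal_injective
  push_cast
  simp_rw [← mul_conj', map_sum, map_mul, map_pow, sum_mul_sum]
  calc ∑ j ∈ Icc 1 n, ∑ i ∈ s, ∑ i' ∈ s, a i * z i ^ j * (conj (a i') * conj (z i') ^ j)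
      = ∑ i ∈ s, ∑ i' ∈ s, a i * conj (a i') * ∑ j ∈ Icc 1 n, (z i * conj (z i')) ^ j := by
        simp_rw [sum_comm (s := Icc 1 n), mul_sum, mul_pow]
        refine sum_congr rfl fun i _ => sum_congr rfl fun i' _ => sum_congr rfl fun j _ => ?_
        ring
    _ = n * ∑ i ∈ s, a i * conj (a i) := by
        rw [mul_sum]
        refine sum_congr rfl fun i hi => ?_
        rw [sum_congr rfl fun i' hi' => by rw [horth i hi i' hi']]
        simp [hi, mul_comm]

theorem cexp_neg_two_pi_I_mul_div_eq_pow (k j n : ℕ) :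
    cexp (-2 * Real.pi * I * k * j / n) = (cexp (2 * Real.pi * I / n))⁻¹ ^ (k * j) := by
  rw [← Complex.exp_neg, ← Complex.exp_nat_mul]
  congr 1
  push_cast
  ring

theorem pow_add_mul_mul_eq_pow_pow {M : Type*} [Monoid M] {ζ : M} {n : ℕ} (hζ : ζ ^ n = 1)
    (m r j : ℕ) : ζ ^ ((m + r * n) * j) = (ζ ^ m) ^ j := by
  rw [add_mul, pow_add, mul_comm r, mul_assoc, pow_mul ζ n, hζ, one_pow, mul_one, pow_mul]

theorem IsPrimitiveRoot.injOn_pow_Icc {M : Type*} [CommMonoid M] {ζ : M} {n : ℕ}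
    (hζ : IsPrimitiveRoot ζ n) (hn : n ≠ 0) (a : ℕ) :
    Set.InjOn (ζ ^ ·) (Icc (a + 1) (a + n)) := by
  intro m hm m' hm' h
  rw [coe_Icc, Set.mem_Icc] at hm hm'
  have hmod := (hζ.isOfFinOrder hn).pow_eq_pow_iff_modEq.1 h
  rw [← hζ.eq_orderOf] at hmod
  exact hmod.eq_of_abs_lt (abs_sub_lt_iff.2 ⟨by omega, by omega⟩)

theorem tsum_fourier_tail_eq_sum_aliased {n : ℕ} (hn : n ≠ 0) {θ : ℕ → ℂ}
    (hθ : Summable fun k => ‖θ k‖) (j : ℕ) :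
    ∑' k : ℕ, (if n < k then θ k * cexp (-2 * Real.pi * I * k * j / n) else 0) =
      ∑ m ∈ Icc (n + 1) (2 * n),
        (∑' r : ℕ, θ (m + r * n)) * ((cexp (2 * Real.pi * I / n))⁻¹ ^ m) ^ j := by
  set ζ := (cexp (2 * Real.pi * I / n))⁻¹
  have hζ : IsPrimitiveRoot ζ n := (isPrimitiveRoot_exp n hn).inv
  have hsum : Summable fun k : ℕ => θ k * ζ ^ (k * j) :=
    hθ.of_norm_bounded fun k => by simp [hζ.norm'_eq_one hn]
  simp_rw [cexp_neg_two_pi_I_mul_div_eq_pow]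
  rw [tsum_ite_lt_eq_sum_Icc_tsum_add_mul hsum hn, two_mul]
  refine sum_congr rfl fun m _ => ?_
  simp_rw [pow_add_mul_mul_eq_pow_pow hζ.pow_eq_one]
  exact tsum_mul_right

theorem sum_Icc_sq_norm_fourier_tail_eq {n : ℕ} (hn : n ≠ 0) {θ : ℕ → ℂ}
    (hθ : Summable fun k => ‖θ k‖) :
    ∑ j ∈ Icc 1 n,
        ‖∑' k : ℕ, (if n < k then θ k * cexp (-2 * Real.pi * I * k * j / n) else 0)‖ ^ 2
      = n * ∑ m ∈ Icc (n + 1) (2 * n), ‖∑' r : ℕ, θ (m + r * n)‖ ^ 2 := by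
  have hζ := (isPrimitiveRoot_exp n hn).inv
  simp_rw [tsum_fourier_tail_eq_sum_aliased hn hθ]
  refine sum_Icc_norm_sum_mul_pow_sq _ _ _ hn (fun m _ => ?_) ?_
  · rw [pow_right_comm, hζ.pow_eq_one, one_pow]
  · simpa only [two_mul] using hζ.injOn_pow_Icc hn n

section WeightedCauchySchwarz

variable {ι E : Type*} [NormedAddCommGroup E] {f : ι → E} {w : ι → ℝ}

theorem summable_norm_of_summable_inv_of_summable_mul_sq (hw : ∀ i, 0 < w i)
    (hwinv : Summable fun i => (w i)⁻¹) (hf : Summable fun i => w i * ‖f i‖ ^ 2) :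
    Summable fun i => ‖f i‖ := by
  refine ((hwinv.add hf).div_const 2).of_nonneg_of_le (fun i => norm_nonneg _) fun i => ?_
  have hwi := hw i
  rw [le_div_iff₀ two_pos, ← sub_nonneg]
  have : (w i)⁻¹ + w i * ‖f i‖ ^ 2 - ‖f i‖ * 2 = (w i)⁻¹ * (1 - w i * ‖f i‖) ^ 2 := by
    field_simp
    ring
  rw [this]
  positivity

theorem sq_norm_tsum_le_tsum_inv_mul_tsum_mul_sq [CompleteSpace E] (hw : ∀ i, 0 < w i)
    (hwinv : Summable fun i => (w i)⁻¹) (hf : Summable fun i => w i * ‖f i‖ ^ 2) :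
    ‖∑' i, f i‖ ^ 2 ≤ (∑' i, (w i)⁻¹) * ∑' i, w i * ‖f i‖ ^ 2 := by
  have hnorm := summable_norm_of_summable_inv_of_summable_mul_sq hw hwinv hf
  have hA : 0 ≤ ∑' i, (w i)⁻¹ := tsum_nonneg fun i => (inv_pos.2 (hw i)).le
  have hB : 0 ≤ ∑' i, w i * ‖f i‖ ^ 2 := tsum_nonneg fun i => by have := hw i; positivity
  have hfinite : ∀ s : Finset ι, ∑ i ∈ s, ‖f i‖ ≤
      √((∑' i, (w i)⁻¹) * ∑' i, w i * ‖f i‖ ^ 2) := by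
    intro s
    rw [Real.le_sqrt (by positivity) (by positivity)]
    calc (∑ i ∈ s, ‖f i‖) ^ 2 ≤ (∑ i ∈ s, (w i)⁻¹) * ∑ i ∈ s, w i * ‖f i‖ ^ 2 :=
          sum_sq_le_sum_mul_sum_of_sq_le_mul s (fun i _ => (inv_pos.2 (hw i)).le)
            (fun i _ => by have := hw i; positivity)
            (fun i _ => by rw [← mul_assoc, inv_mul_cancel₀ (hw i).ne', one_mul])
      _ ≤ (∑' i, (w i)⁻¹) * ∑' i, w i * ‖f i‖ ^ 2 :=
          mul_le_mul (hwinv.sum_le_tsum s fun i _ => (inv_pos.2 (hw i)).le)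
            (hf.sum_le_tsum s fun i _ => by have := hw i; positivity)
            (sum_nonneg fun i _ => by have := hw i; positivity) hA
  have htsum := hnorm.tsum_le_of_sum_le hfinite
  rw [← Real.le_sqrt (norm_nonneg _) (by positivity)]
  exact (norm_tsum_le_tsum_norm hnorm).trans htsum

end WeightedCauchySchwarz

theorem summable_inv_one_add_rpow {p : ℝ} (hp : 1 < p) :
    Summable fun r : ℕ => ((1 + (r : ℝ)) ^ p)⁻¹ := by
  refine ((summable_nat_add_iff 1).2 (Real.summable_nat_rpow_inv.2 hp)).congr fun r => ?_
  push_cast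
  rw [add_comm]

theorem inv_one_add_rpow_le {p : ℝ} (hp : 0 ≤ p) {n m : ℕ} (hn : n ≠ 0) (hm : n < m) (r : ℕ) :
    ((1 + ((m + r * n : ℕ) : ℝ)) ^ p)⁻¹ ≤ ((n : ℝ) ^ p)⁻¹ * ((1 + (r : ℝ)) ^ p)⁻¹ := by
  have hn' : (0 : ℝ) < n := by positivity
  have hle : (n : ℝ) * (1 + r) ≤ 1 + ((m + r * n : ℕ) : ℝ) := by
    have : (n : ℝ) < m := by exact_mod_cast hm
    push_cast
    nlinarith
  rw [← mul_inv, ← Real.mul_rpow hn'.le (by positivity)]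
  exact inv_anti₀ (by positivity) (Real.rpow_le_rpow (by positivity) hle hp)

theorem sq_norm_tsum_add_mul_le {E : Type*} [NormedAddCommGroup E] [CompleteSpace E]
    {p : ℝ} (hp : 1 < p) {n m : ℕ} (hn : n ≠ 0) (hm : n < m) {θ : ℕ → E}
    (hθ : Summable fun k : ℕ => (1 + (k : ℝ)) ^ p * ‖θ k‖ ^ 2) :
    ‖∑' r, θ (m + r * n)‖ ^ 2 ≤ ((n : ℝ) ^ p)⁻¹ * (∑' r : ℕ, ((1 + (r : ℝ)) ^ p)⁻¹) *
      ∑' r, (1 + ((m + r * n : ℕ) : ℝ)) ^ p * ‖θ (m + r * n)‖ ^ 2 := by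
  have hinj : Function.Injective fun r : ℕ => m + r * n := fun r r' h => by
    simpa [hn] using h
  have hZ := (summable_inv_one_add_rpow hp).mul_left ((n : ℝ) ^ p)⁻¹
  have hwinv : Summable fun r : ℕ => ((1 + ((m + r * n : ℕ) : ℝ)) ^ p)⁻¹ :=
    hZ.of_nonneg_of_le (fun r => by positivity) (inv_one_add_rpow_le (by linarith) hn hm)
  refine (sq_norm_tsum_le_tsum_inv_mul_tsum_mul_sq (fun r => by positivity) hwinv
    (hθ.comp_injective hinj)).trans
      (mul_le_mul_of_nonneg_right ?_ (tsum_nonneg fun r => by positivity))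
  rw [← tsum_mul_left]
  exact hwinv.tsum_le_tsum (inv_one_add_rpow_le (by linarith) hn hm) hZ

theorem sum_sq_norm_tsum_add_mul_le {E : Type*} [NormedAddCommGroup E] [CompleteSpace E]
    {p : ℝ} (hp : 1 < p) {n : ℕ} (hn : n ≠ 0) {θ : ℕ → E}
    (hθ : Summable fun k : ℕ => (1 + (k : ℝ)) ^ p * ‖θ k‖ ^ 2) :
    ∑ m ∈ Icc (n + 1) (2 * n), ‖∑' r, θ (m + r * n)‖ ^ 2 ≤
      ((n : ℝ) ^ p)⁻¹ * (∑' r : ℕ, ((1 + (r : ℝ)) ^ p)⁻¹) *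
        ∑' k : ℕ, (if n < k then (1 + (k : ℝ)) ^ p * ‖θ k‖ ^ 2 else 0) := by
  rw [tsum_ite_lt_eq_sum_Icc_tsum_add_mul hθ hn, two_mul, mul_sum]
  gcongr with m hm
  exact sq_norm_tsum_add_mul_le hp hn (by have := (mem_Icc.1 hm).1; omega) hθ

theorem aliasing_tail_bound (β L : ℝ) (hβ : 1 / 2 < β) (hL : 0 < L) :
    ∃ C > 0, ∀ (n : ℕ), 1 ≤ n → ∀ θ : ℕ → ℂ,
      (Summable fun k : ℕ => (1 + (k:ℝ)) ^ (2 * β) * ‖θ k‖ ^ 2) →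
      (∑' k : ℕ, (if n < k then (1 + (k:ℝ)) ^ (2 * β) * ‖θ k‖ ^ 2 else 0) ≤ L ^ 2) →
      (∑ j ∈ Finset.Icc 1 n,
          ‖∑' k : ℕ, (if n < k then θ k * Complex.exp (-2 * Real.pi * I * k * j / n) else 0)‖ ^ 2
        = n * ∑ m ∈ Finset.Icc (n + 1) (2 * n), ‖∑' r : ℕ, θ (m + r * n)‖ ^ 2) ∧
      (∑ j ∈ Finset.Icc 1 n,
          ‖∑' k : ℕ, (if n < k then θ k * Complex.exp (-2 * Real.pi * I * k * j / n) else 0)‖ ^ 2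
        ≤ C * (n:ℝ) ^ ((1:ℝ) - 2 * β)) := by
  have hp : 1 < 2 * β := by linarith
  set Z := ∑' r : ℕ, ((1 + (r : ℝ)) ^ (2 * β))⁻¹
  have hZ : 0 < Z := (summable_inv_one_add_rpow hp).tsum_pos (fun r => by positivity) 0 (by simp)
  refine ⟨L ^ 2 * Z, by positivity, fun n hn θ hθ htail => ?_⟩
  have hn0 : n ≠ 0 := by omega
  have hθnorm : Summable fun k => ‖θ k‖ := summable_norm_of_summable_inv_of_summable_mul_sq
    (fun k => by positivity) (summable_inv_one_add_rpow hp) hθ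
  rw [sum_Icc_sq_norm_fourier_tail_eq hn0 hθnorm]
  refine ⟨rfl, ?_⟩
  calc (n : ℝ) * ∑ m ∈ Icc (n + 1) (2 * n), ‖∑' r : ℕ, θ (m + r * n)‖ ^ 2
      ≤ n * (((n : ℝ) ^ (2 * β))⁻¹ * Z * L ^ 2) := by
        gcongr
        exact (sum_sq_norm_tsum_add_mul_le hp hn0 hθ).trans (by gcongr)
    _ = L ^ 2 * Z * (n : ℝ) ^ ((1 : ℝ) - 2 * β) := by
        rw [Real.rpow_sub (by positivity), Real.rpow_one]
        ring
end

section
/- Let θ₁,...,θₙ be complex numbers with ∑_{k=1}^n k^{2β}|θₖ|² ≤ L² for some β > 1/2. Then n² ∑_{j=1}^n (|θⱼ|²/j²)·|e^{2πij/n} − 1 − 2πij/n|² ≤ C·max(n^{−2}, n^{−2β}) for a constant C depending only on L and β. -/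
/-!
Writing `E(x) = exp (x i) - 1 - x i`, we have `E' (t) = i (exp (t i) - 1)`, of norm at most `|t|`,
so comparing with `t ^ 2 / 2` gives `‖E(x)‖ ≤ x ^ 2 / 2`. With `x = 2πj/n` the `j`-th summand is
therefore at most `4π⁴ j² ‖θ j‖² / n⁴`, and `j² ≤ max 1 (n ^ (2 - 2β)) · j ^ (2β)` for `1 ≤ j ≤ n`
turns the sum into the Sobolev-type weight `∑ j ^ (2β) ‖θ j‖² ≤ L²`.
-/

open Complex Finset ComplexConjugate Real

theorem norm_exp_ofReal_mul_I_sub_one_sub_le_of_nonneg {x : ℝ} (hx : 0 ≤ x) :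
    ‖exp (x * I) - 1 - x * I‖ ≤ x ^ 2 / 2 := by
  have hf (t : ℝ) : HasDerivAt (fun t : ℝ ↦ exp (t * I) - 1 - t * I) (I * (exp (t * I) - 1)) t := by
    have h : HasDerivAt (fun t : ℝ ↦ (t : ℂ) * I) I t := by
      simpa using (hasDerivAt_id t).ofReal_comp.mul_const I
    exact ((h.cexp.sub_const 1).fun_sub h).congr_deriv (by ring)
  have hB (t : ℝ) : HasDerivAt (fun t : ℝ ↦ t ^ 2 / 2) t t := by
    simpa using (hasDerivAt_pow 2 t).div_const 2
  refine image_norm_le_of_norm_deriv_right_le_deriv_boundary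
    (fun t _ ↦ (hf t).continuousAt.continuousWithinAt) (fun t _ ↦ (hf t).hasDerivWithinAt)
    (by simp) hB ?_ ⟨hx, le_rfl⟩
  rintro t ⟨ht, -⟩
  rw [norm_mul, norm_I, one_mul, mul_comm]
  simpa [abs_of_nonneg ht] using Real.norm_exp_I_mul_ofReal_sub_one_le (x := t)

theorem norm_exp_ofReal_mul_I_sub_one_sub_le (x : ℝ) :
    ‖exp (x * I) - 1 - x * I‖ ≤ x ^ 2 / 2 := by
  rcases le_total 0 x with hx | hx
  · exact norm_exp_ofReal_mul_I_sub_one_sub_le_of_nonneg hx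
  · have hconj : conj (exp (↑(-x) * I) - 1 - ↑(-x) * I) = exp (x * I) - 1 - x * I := by
      simp [← exp_conj, sub_eq_add_neg]
    have h := norm_exp_ofReal_mul_I_sub_one_sub_le_of_nonneg (neg_nonneg.2 hx)
    rwa [← Complex.norm_conj, hconj, neg_sq] at h

theorem norm_exp_two_pi_I_mul_div_sub_one_sub_le (j n : ℕ) :
    ‖exp (2 * π * I * j / n) - 1 - 2 * π * I * j / n‖ ≤ 2 * π ^ 2 * j ^ 2 / n ^ 2 := by
  have h := norm_exp_ofReal_mul_I_sub_one_sub_le (2 * π * j / n)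
  push_cast at h
  convert h using 1
  · ring_nf
  · ring

theorem rpow_le_max_one_rpow {x y : ℝ} (hx : 1 ≤ x) (hxy : x ≤ y) (s : ℝ) :
    x ^ s ≤ max 1 (y ^ s) := by
  rcases le_total s 0 with hs | hs
  · exact (Real.rpow_le_one_of_one_le_of_nonpos hx hs).trans (le_max_left _ _)
  · exact (Real.rpow_le_rpow (by linarith) hxy hs).trans (le_max_right _ _)

theorem sum_Icc_sq_mul_le (β : ℝ) (n : ℕ) {a : ℕ → ℝ} (ha : ∀ k, 0 ≤ a k) :
    ∑ k ∈ Icc 1 n, (k : ℝ) ^ 2 * a k ≤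
      max 1 ((n : ℝ) ^ (2 - 2 * β)) * ∑ k ∈ Icc 1 n, (k : ℝ) ^ (2 * β) * a k := by
  rw [mul_sum]
  refine sum_le_sum fun k hk ↦ ?_
  obtain ⟨hk1, hkn⟩ := mem_Icc.1 hk
  have hk_one : (1 : ℝ) ≤ k := by exact_mod_cast hk1
  calc (k : ℝ) ^ 2 * a k = (k : ℝ) ^ (2 - 2 * β) * ((k : ℝ) ^ (2 * β) * a k) := by
        rw [← mul_assoc, ← Real.rpow_add (by linarith)]; norm_num
    _ ≤ _ := by
        gcongr
        · exact mul_nonneg (by positivity) (ha k)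
        · exact rpow_le_max_one_rpow hk_one (by exact_mod_cast hkn) _

theorem dft_taylor_remainder_bound_general (β L : ℝ) (hL : 0 < L) :
    ∃ C > 0, ∀ (n : ℕ), 1 ≤ n → ∀ θ : ℕ → ℂ,
      (∑ k ∈ Finset.Icc 1 n, (k:ℝ) ^ (2 * β) * ‖θ k‖ ^ 2 ≤ L ^ 2) →
      (n:ℝ) ^ 2 * ∑ j ∈ Finset.Icc 1 n,
          ‖θ j‖ ^ 2 / (j:ℝ) ^ 2 *
            ‖Complex.exp (2 * Real.pi * I * j / n) - 1 - 2 * Real.pi * I * j / n‖ ^ 2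
        ≤ C * max ((n:ℝ) ^ (-2 : ℝ)) ((n:ℝ) ^ (-(2 * β))) := by
  refine ⟨4 * π ^ 4 * L ^ 2, by positivity, fun n hn θ hθ ↦ ?_⟩
  have hn0 : (0 : ℝ) < n := by exact_mod_cast hn
  have hterm : ∀ j ∈ Icc 1 n, ‖θ j‖ ^ 2 / (j : ℝ) ^ 2 *
      ‖exp (2 * π * I * j / n) - 1 - 2 * π * I * j / n‖ ^ 2 ≤
        4 * π ^ 4 / (n : ℝ) ^ 4 * ((j : ℝ) ^ 2 * ‖θ j‖ ^ 2) := by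
    intro j hj
    have hj0 : (0 : ℝ) < j := by exact_mod_cast (mem_Icc.1 hj).1
    calc _ ≤ ‖θ j‖ ^ 2 / (j : ℝ) ^ 2 * (2 * π ^ 2 * j ^ 2 / n ^ 2) ^ 2 := by
          gcongr; exact norm_exp_two_pi_I_mul_div_sub_one_sub_le j n
      _ = _ := by field_simp; ring
  calc _ ≤ (n : ℝ) ^ 2 * (4 * π ^ 4 / (n : ℝ) ^ 4 * ∑ j ∈ Icc 1 n, (j : ℝ) ^ 2 * ‖θ j‖ ^ 2) := by
        gcongr (n : ℝ) ^ 2 * ?_; rw [mul_sum]; exact sum_le_sum hterm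
    _ ≤ (n : ℝ) ^ 2 * (4 * π ^ 4 / (n : ℝ) ^ 4 * (max 1 ((n : ℝ) ^ (2 - 2 * β)) * L ^ 2)) := by
        gcongr
        exact (sum_Icc_sq_mul_le β n fun k ↦ by positivity).trans (by gcongr)
    _ = 4 * π ^ 4 * L ^ 2 * ((n : ℝ) ^ (-2 : ℝ) * max 1 ((n : ℝ) ^ (2 - 2 * β))) := by
        rw [Real.rpow_neg hn0.le, Real.rpow_two]; field_simp
    _ = _ := by
        rw [mul_max_of_nonneg _ _ (by positivity), mul_one, ← Real.rpow_add hn0]; ring_nf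

theorem dft_taylor_remainder_bound (β L : ℝ) (hβ : 1 / 2 < β) (hL : 0 < L) :
    ∃ C > 0, ∀ (n : ℕ), 1 ≤ n → ∀ θ : ℕ → ℂ,
      (∑ k ∈ Finset.Icc 1 n, (k:ℝ) ^ (2 * β) * ‖θ k‖ ^ 2 ≤ L ^ 2) →
      (n:ℝ) ^ 2 * ∑ j ∈ Finset.Icc 1 n,
          ‖θ j‖ ^ 2 / (j:ℝ) ^ 2 *
            ‖Complex.exp (2 * Real.pi * I * j / n) - 1 - 2 * Real.pi * I * j / n‖ ^ 2
        ≤ C * max ((n:ℝ) ^ (-2 : ℝ)) ((n:ℝ) ^ (-(2 * β))) :=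
  dft_taylor_remainder_bound_general β L hL
end
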